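/- Fix matrices E, A ∈ ℝ^{N×T} (a residual matrix and an orthogonalized-covariate matrix), a partition C₁,…,C_M of {1,…,N}, a symmetric P ∈ ℝ^{T×T} with P² = I_T, and a sign pattern B ∈ {0,1}^M. Define D = ½(A − AP), assume ⟨D, D⟩ > 0, and define tilde versions cluster-wise: Ẽ_{C_m} = E_{C_m}P^{B_m}, Ã_{C_m} = A_{C_m}P^{B_m}, D̃_{C_m} = D_{C_m}P^{B_m}. Set β̂ = ⟨D, E⟩/⟨D, D⟩, β̃ = ⟨D, Ẽ⟩/⟨D, D⟩, and ρ̃ = ⟨D, D̃⟩/√(⟨D,D⟩⟨D̃,D̃⟩), and assume ρ̃ < 1. For b ∈ ℝ define E(b) = E − bA and Ẽ(b) = Ẽ − bÃ, and S(V) = ⟨D, V⟩/⟨D, D⟩. Then: (i) S(E(b)) = β̂ − b; (ii) S(Ẽ(b)) = β̃ − b·ρ̃; and (iii) S(E(b)) > S(Ẽ(b)) if and only if b < β̂ + (ρ̃β̂ − β̃)/(1 − ρ̃). -/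
import Mathlib


open Matrix Finset

/-- The entrywise inner product `⟨U, V⟩ = Σ_{i,t} U_{i,t} V_{i,t}`. -/
def matInner {N T : ℕ} (U V : Matrix (Fin N) (Fin T) ℝ) : ℝ :=
  ∑ i, ∑ t, U i t * V i t

/-- Cluster-wise right-transformation: for each unit `i`, the rows of cluster `c i` are
right-multiplied by `P` when `B (c i) = true` (i.e. `P^{B_m}`), and left unchanged otherwise. -/
def clusterTransform {N T M : ℕ} (c : Fin N → Fin M) (P : Matrix (Fin T) (Fin T) ℝ)
    (B : Fin M → Bool) (E : Matrix (Fin N) (Fin T) ℝ) : Matrix (Fin N) (Fin T) ℝ :=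
  fun i t => if B (c i) then (∑ s, E i s * P s t) else E i t

lemma matInner_sub_smul {N T : ℕ} (D U V : Matrix (Fin N) (Fin T) ℝ) (b : ℝ) :
    matInner D (U - b • V) = matInner D U - b * matInner D V := by
  simp only [matInner, Matrix.sub_apply, Matrix.smul_apply, smul_eq_mul, Finset.mul_sum,
    ← Finset.sum_sub_distrib]
  exact Finset.sum_congr rfl fun i _ => Finset.sum_congr rfl fun t _ => by ring

/-- Fix matrices `E, A ∈ ℝ^{N×T}`, a partition of `{1,…,N}` into `M`
clusters (encoded by the cluster-membership map `c`), a symmetric `P` with `P² = I`, and a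
sign pattern `B ∈ {0,1}^M`.  Define `D = ½(A − AP)` (assumed `⟨D,D⟩ > 0`), the cluster-wise
tilde versions `Ẽ, Ã, D̃`, the quantities `β̂ = ⟨D,E⟩/⟨D,D⟩`, `β̃ = ⟨D,Ẽ⟩/⟨D,D⟩`,
`ρ̃ = ⟨D,D̃⟩/√(⟨D,D⟩⟨D̃,D̃⟩)` (assumed `< 1`), and for `b ∈ ℝ` set `E(b) = E − bA`,
`Ẽ(b) = Ẽ − bÃ` and `S(V) = ⟨D,V⟩/⟨D,D⟩`.  Then
(i) `S(E(b)) = β̂ − b`; (ii) `S(Ẽ(b)) = β̃ − b ρ̃`; and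
(iii) `S(E(b)) > S(Ẽ(b)) ↔ b < β̂ + (ρ̃ β̂ − β̃)/(1 − ρ̃)`. -/
theorem stmt_10 (N T M : ℕ) (E A : Matrix (Fin N) (Fin T) ℝ)
    (c : Fin N → Fin M) (P : Matrix (Fin T) (Fin T) ℝ)
    (hPsymm : Pᵀ = P) (hPidem : P * P = 1)
    (B : Fin M → Bool)
    (D : Matrix (Fin N) (Fin T) ℝ) (hD : D = (1 / 2 : ℝ) • (A - A * P))
    (hDD : 0 < matInner D D)
    (Et At Dt : Matrix (Fin N) (Fin T) ℝ)
    (hEt : Et = clusterTransform c P B E)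
    (hAt : At = clusterTransform c P B A)
    (hDt : Dt = clusterTransform c P B D)
    (βhat βtilde ρtilde : ℝ)
    (hβhat : βhat = matInner D E / matInner D D)
    (hβtilde : βtilde = matInner D Et / matInner D D)
    (hρ : ρtilde = matInner D Dt / Real.sqrt (matInner D D * matInner Dt Dt))
    (hρlt : ρtilde < 1) :
    (∀ b : ℝ, matInner D (E - b • A) / matInner D D = βhat - b) ∧
    (∀ b : ℝ, matInner D (Et - b • At) / matInner D D = βtilde - b * ρtilde) ∧
    (∀ b : ℝ, matInner D (E - b • A) / matInner D D > matInner D (Et - b • At) / matInner D D ↔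
      b < βhat + (ρtilde * βhat - βtilde) / (1 - ρtilde)) := by
  have hDD0 : matInner D D ≠ 0 := ne_of_gt hDD
  -- D * P = -D
  have hDPmat : D * P = -D := by
    rw [hD, Matrix.smul_mul, Matrix.sub_mul, Matrix.mul_assoc, hPidem, Matrix.mul_one,
      smul_sub, smul_sub]
    abel
  have hDP : ∀ i t, (∑ s, D i s * P s t) = -D i t := by
    intro i t
    have := congrFun (congrFun hDPmat i) t
    simpa [Matrix.mul_apply, Matrix.neg_apply] using this
  have hPsy : ∀ s t, P s t = P t s := by
    intro s t
    conv_lhs => rw [← hPsymm]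
    exact Matrix.transpose_apply P s t
  -- key swap lemma
  have hswap : ∀ (U : Matrix (Fin N) (Fin T) ℝ) (i : Fin N),
      (∑ t, D i t * ∑ s, U i s * P s t) = -∑ t, D i t * U i t := by
    intro U i
    simp only [Finset.mul_sum]
    rw [Finset.sum_comm]
    have h1 : ∀ s : Fin T, (∑ t, D i t * (U i s * P s t)) = U i s * (-D i s) := by
      intro s
      calc ∑ t, D i t * (U i s * P s t) = U i s * ∑ t, D i t * P t s := by
            rw [Finset.mul_sum]
            refine Finset.sum_congr rfl fun t _ => ?_
            rw [hPsy s t]; ring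
        _ = U i s * (-D i s) := by rw [hDP i s]
    rw [Finset.sum_congr rfl fun s _ => h1 s]
    rw [← Finset.sum_neg_distrib]
    refine Finset.sum_congr rfl fun s _ => ?_
    ring
  have hDe : ∀ i t, D i t = (1/2) * (A i t - (A * P) i t) := by
    intro i t; rw [hD]; simp
  -- rowwise ⟨D,D⟩ = ⟨D,A⟩
  have hrow : ∀ i, (∑ t, D i t * D i t) = ∑ t, D i t * A i t := by
    intro i
    have h2 : (∑ t, D i t * (A * P) i t) = -∑ t, D i t * A i t := by
      have := hswap A i
      simpa [Matrix.mul_apply] using this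
    have h3 : (∑ t, D i t * D i t)
        = (1/2) * (∑ t, D i t * A i t) - (1/2) * (∑ t, D i t * (A * P) i t) := by
      rw [Finset.mul_sum, Finset.mul_sum, ← Finset.sum_sub_distrib]
      refine Finset.sum_congr rfl fun t _ => ?_
      simp only [hDe]
      ring
    rw [h3, h2]; ring
  have hDA : matInner D A = matInner D D := by
    unfold matInner
    exact Finset.sum_congr rfl fun i _ => (hrow i).symm
  -- rowwise transformed equality
  have hrowAt : ∀ i, (∑ t, D i t * At i t) = ∑ t, D i t * Dt i t := by
    intro i
    rw [hAt, hDt]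
    simp only [clusterTransform]
    by_cases hB : B (c i) = true
    · simp only [hB, if_true]
      rw [hswap A i, hswap D i, hrow i]
    · simp only [hB, if_false]
      exact (hrow i).symm
  have hDAtDt : matInner D At = matInner D Dt := by
    unfold matInner
    exact Finset.sum_congr rfl fun i _ => hrowAt i
  -- Dt is ± D rowwise
  have hDte : ∀ i t, Dt i t = (if B (c i) then (-1 : ℝ) else 1) * D i t := by
    intro i t
    rw [hDt]
    simp only [clusterTransform]
    by_cases hB : B (c i) = true
    · simp only [hB, if_true]
      rw [hDP i t]; ring
    · simp [hB]
  have hDtDt : matInner Dt Dt = matInner D D := by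
    unfold matInner
    refine Finset.sum_congr rfl fun i _ => Finset.sum_congr rfl fun t _ => ?_
    rw [hDte i t]
    split_ifs <;> ring
  have hsq : Real.sqrt (matInner D D * matInner Dt Dt) = matInner D D := by
    rw [hDtDt]
    exact Real.sqrt_mul_self hDD.le
  have hρ' : matInner D Dt = ρtilde * matInner D D := by
    rw [hρ, hsq]; field_simp
  have part1 : ∀ b : ℝ, matInner D (E - b • A) / matInner D D = βhat - b := by
    intro b
    rw [matInner_sub_smul, hDA, hβhat]
    field_simp
  have part2 : ∀ b : ℝ, matInner D (Et - b • At) / matInner D D = βtilde - b * ρtilde := by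
    intro b
    rw [matInner_sub_smul, hDAtDt, hρ', hβtilde]
    field_simp
  refine ⟨part1, part2, fun b => ?_⟩
  rw [part1 b, part2 b]
  have h1ρ : 0 < 1 - ρtilde := by linarith
  have hRHS : βhat + (ρtilde * βhat - βtilde) / (1 - ρtilde)
      = (βhat - βtilde) / (1 - ρtilde) := by
    field_simp
    ring
  rw [hRHS, lt_div_iff₀ h1ρ]
  constructor
  · intro h; nlinarith
  · intro h; nlinarith
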